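/- arXiv:alg-geom/9501006 — 7 statements merged into one kernel-verified Lean document; each statement's English description precedes it below -/
import Mathlib

section
/- Let R be a commutative ring, A a commutative R-algebra, and G a finite group acting on A by R-algebra automorphisms, such that the order of G is invertible in R. Then for every commutative R-algebra R', the canonical R'-algebra homomorphism (A^G) ⊗_R R' → (A ⊗_R R')^G, induced by the inclusion of the invariant subalgebra A^G into A and by letting G act on the first tensor factor of A ⊗_R R', is bijective. (This is the affine/ring-theoretic content of the lemma that taking the quotient by a finite group of order invertible on the base commutes with base change.) -/
open scoped TensorProduct

/-- The subalgebra of `G`-invariant elements of an `R`-algebra `A` on which a group `G`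
acts by `R`-algebra automorphisms. -/
def invariantSubalgebra (R : Type*) [CommRing R] (A : Type*) [CommRing A] [Algebra R A]
    (G : Type*) [Group G] [MulSemiringAction G A] [SMulCommClass G R A] :
    Subalgebra R A where
  carrier := {a | ∀ g : G, g • a = a}
  mul_mem' {a b} ha hb := fun g => by rw [smul_mul', ha g, hb g]
  add_mem' {a b} ha hb := fun g => by rw [smul_add, ha g, hb g]
  algebraMap_mem' r := fun g => by
    rw [Algebra.algebraMap_eq_smul_one, smul_comm, smul_one]

section Reynolds

variable (R : Type*) [CommRing R] (A : Type*) [CommRing A] [Algebra R A]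
    (G : Type*) [Group G] [Fintype G] [MulSemiringAction G A] [SMulCommClass G R A]
    (hG : IsUnit ((Fintype.card G : R)))

/-- The averaging (Reynolds) operator `A →ₗ[R] A^G`. -/
noncomputable def reynoldsAux : A →ₗ[R] invariantSubalgebra R A G where
  toFun a := ⟨(↑hG.unit⁻¹ : R) • ∑ g : G, g • a, by
    intro h
    rw [smul_comm, Finset.smul_sum]
    congr 1
    simp_rw [smul_smul]
    exact Fintype.sum_equiv (Equiv.mulLeft h) _ _ (fun g => rfl)⟩
  map_add' a b := by ext; simp [Finset.sum_add_distrib]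
  map_smul' r a := by
    ext
    simp only [RingHom.id_apply, SetLike.val_smul]
    rw [smul_comm r]
    congr 1
    rw [Finset.smul_sum]
    exact Finset.sum_congr rfl (fun g _ => smul_comm g r a)

lemma reynoldsAux_invariant (a : invariantSubalgebra R A G) :
    reynoldsAux R A G hG (a : A) = a := by
  ext
  show (↑hG.unit⁻¹ : R) • ∑ g : G, g • (a : A) = (a : A)
  have h1 : ∀ g : G, g • (a : A) = (a : A) := a.2
  simp_rw [h1]
  rw [Finset.sum_const, Finset.card_univ, ← Nat.cast_smul_eq_nsmul R, smul_smul]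
  have hone : (↑hG.unit⁻¹ : R) * (Fintype.card G : R) = 1 := by
    have h2 := hG.unit.inv_mul
    rwa [hG.unit_spec] at h2
  simp only [hone, one_smul]

variable (R' : Type*) [CommRing R'] [Algebra R R'] {B : Type*} [CommRing B] [Algebra R B]

lemma map_id_toLinearMap (f : A →ₐ[R] B) :
    (Algebra.TensorProduct.map f (AlgHom.id R R')).toLinearMap
      = LinearMap.rTensor R' f.toLinearMap := by
  ext
  simp

lemma reynolds_comp :
    ((invariantSubalgebra R A G).val.toLinearMap.comp (reynoldsAux R A G hG)).comp
      (invariantSubalgebra R A G).val.toLinearMap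
      = (invariantSubalgebra R A G).val.toLinearMap := by
  ext a
  simp [reynoldsAux_invariant R A G hG a]

end Reynolds

set_option synthInstance.maxHeartbeats 400000 in
/-- Let `R` be a commutative ring, `A` a commutative `R`-algebra and `G` a finite group
acting on `A` by `R`-algebra automorphisms, with the order of `G` invertible in `R`.
Then for every commutative `R`-algebra `R'` the canonical map
`(A^G) ⊗[R] R' → (A ⊗[R] R')^G` is bijective; i.e. the canonical map
`(A^G) ⊗[R] R' → A ⊗[R] R'` is injective with range exactly the invariants of the
`G`-action on the first tensor factor. -/
theorem invariants_tensor_bijective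
    (R : Type*) [CommRing R] (A : Type*) [CommRing A] [Algebra R A]
    (G : Type*) [Group G] [Fintype G] [MulSemiringAction G A] [SMulCommClass G R A]
    (hG : IsUnit ((Fintype.card G : R)))
    (R' : Type*) [CommRing R'] [Algebra R R'] :
    Function.Injective
      (Algebra.TensorProduct.map (invariantSubalgebra R A G).val (AlgHom.id R R')) ∧
    Set.range
      (Algebra.TensorProduct.map (invariantSubalgebra R A G).val (AlgHom.id R R')) =
      {x : A ⊗[R] R' | ∀ g : G,
        Algebra.TensorProduct.map (MulSemiringAction.toAlgHom R A g) (AlgHom.id R R') x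
          = x} := by
  set ι := (invariantSubalgebra R A G).val with hι
  set q := reynoldsAux R A G hG with hq
  set F := Algebra.TensorProduct.map ι (AlgHom.id R R') with hF
  -- left inverse for injectivity
  have hleft : ∀ z : (invariantSubalgebra R A G) ⊗[R] R',
      (LinearMap.rTensor R' q) (F z) = z := by
    intro z
    have : (LinearMap.rTensor R' q).comp F.toLinearMap = LinearMap.id := by
      rw [hF, map_id_toLinearMap, ← LinearMap.rTensor_comp]
      rw [show q.comp ι.toLinearMap = LinearMap.id by
        ext a; exact congrArg Subtype.val (reynoldsAux_invariant R A G hG a)]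
      exact LinearMap.rTensor_id _ _
    exact DFunLike.congr_fun this z
  constructor
  · intro x y h
    have := congrArg (LinearMap.rTensor R' q) h
    rwa [hleft x, hleft y] at this
  · ext x
    constructor
    · rintro ⟨y, rfl⟩ g
      induction y using TensorProduct.induction_on with
      | zero => rw [map_zero, map_zero]
      | tmul a r =>
        simp only [hF, Algebra.TensorProduct.map_tmul, AlgHom.id_apply]
        show (g • (a : A)) ⊗ₜ[R] r = (a : A) ⊗ₜ[R] r
        rw [a.2 g]
      | add u v hu hv => rw [map_add, map_add, hu, hv]
    · intro hx
      refine ⟨LinearMap.rTensor R' q x, ?_⟩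
      -- F ∘ rTensor q = rTensor (ι ∘ q) = average of the rTensor σ_g
      have hcomp : ∀ z : A ⊗[R] R',
          F (LinearMap.rTensor R' q z)
            = (↑hG.unit⁻¹ : R) • ∑ g : G,
                (LinearMap.rTensor R' (MulSemiringAction.toAlgHom R A g).toLinearMap) z := by
        intro z
        have heq : (LinearMap.rTensor R' ι.toLinearMap).comp (LinearMap.rTensor R' q)
            = (↑hG.unit⁻¹ : R) • ∑ g : G,
              (LinearMap.rTensor R' (MulSemiringAction.toAlgHom R A g).toLinearMap) := by
          apply TensorProduct.ext'
          intro a r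
          simp only [LinearMap.comp_apply, LinearMap.rTensor_tmul, LinearMap.smul_apply,
            LinearMap.sum_apply, AlgHom.toLinearMap_apply]
          show ((↑hG.unit⁻¹ : R) • ∑ g : G, g • a) ⊗ₜ[R] r
            = (↑hG.unit⁻¹ : R) • ∑ g : G, (g • a) ⊗ₜ[R] r
          rw [← TensorProduct.smul_tmul', TensorProduct.sum_tmul]
        calc F (LinearMap.rTensor R' q z)
            = (LinearMap.rTensor R' ι.toLinearMap) (LinearMap.rTensor R' q z) := by
              rw [hF, ← map_id_toLinearMap]; rfl
          _ = _ := by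
              rw [← LinearMap.comp_apply, heq]
              simp only [LinearMap.smul_apply, LinearMap.sum_apply]
      rw [hcomp x]
      have hgx : ∀ g : G,
          (LinearMap.rTensor R' (MulSemiringAction.toAlgHom R A g).toLinearMap) x = x := by
        intro g
        rw [← map_id_toLinearMap]
        exact hx g
      simp_rw [hgx]
      rw [Finset.sum_const, Finset.card_univ, ← Nat.cast_smul_eq_nsmul R, smul_smul]
      have hone : (↑hG.unit⁻¹ : R) * (Fintype.card G : R) = 1 := by
        have h2 := hG.unit.inv_mul
        rwa [hG.unit_spec] at h2
      simp only [hone, one_smul]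
end

section
/- Let k be a field, n a positive integer, and ζ ∈ k a primitive n-th root of unity. Consider the k-algebra automorphism g of the formal power series ring k⟦x⟧ given by rescaling x ↦ ζx (i.e., sending a power series f(x) to f(ζx)). Then the k-algebra homomorphism φ : k⟦t⟧ → k⟦x⟧ determined by t ↦ xⁿ is injective, and its range is exactly the subalgebra of power series fixed by g. In particular the ring of invariants of the cyclic group generated by g on k⟦x⟧ is itself isomorphic to a formal power series ring in one variable over k. -/
open PowerSeries

/-- The subalgebra of the formal power series ring `k⟦x⟧` consisting of the power series
fixed by the rescaling automorphism `x ↦ ζx`. -/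
def rescaleFixedSubalgebra (k : Type*) [Field k] (ζ : k) :
    Subalgebra k (PowerSeries k) where
  carrier := {f | PowerSeries.rescale ζ f = f}
  mul_mem' {a b} ha hb := by simp only [Set.mem_setOf_eq, map_mul] at *; rw [ha, hb]
  add_mem' {a b} ha hb := by simp only [Set.mem_setOf_eq, map_add] at *; rw [ha, hb]
  algebraMap_mem' r := by
    show PowerSeries.rescale ζ (algebraMap k (PowerSeries k) r) = _
    ext m
    simp only [PowerSeries.coeff_rescale, PowerSeries.algebraMap_apply,
      Algebra.algebraMap_self, RingHom.id_apply, PowerSeries.coeff_C]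
    split_ifs with h
    · subst h; simp
    · simp

private noncomputable def phiFun (k : Type*) [Field k] (n : ℕ) (f : PowerSeries k) :
    PowerSeries k :=
  PowerSeries.mk fun j => if n ∣ j then PowerSeries.coeff (j / n) f else 0

private lemma coeff_phiFun {k : Type*} [Field k] (n : ℕ) (f : PowerSeries k) (j : ℕ) :
    PowerSeries.coeff j (phiFun k n f) =
      if n ∣ j then PowerSeries.coeff (j / n) f else 0 := by
  simp [phiFun]

private lemma phiFun_mul {k : Type*} [Field k] (n : ℕ) (hn : 0 < n) (f g : PowerSeries k) :
    phiFun k n (f * g) = phiFun k n f * phiFun k n g := by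
  ext j
  rw [coeff_phiFun, PowerSeries.coeff_mul]
  have hterm : ∀ pq : ℕ × ℕ,
      PowerSeries.coeff pq.1 (phiFun k n f) * PowerSeries.coeff pq.2 (phiFun k n g)
        = if n ∣ pq.1 ∧ n ∣ pq.2 then
            PowerSeries.coeff (pq.1 / n) f * PowerSeries.coeff (pq.2 / n) g else 0 := by
    rintro ⟨p, q⟩
    rw [coeff_phiFun, coeff_phiFun]
    by_cases h1 : n ∣ p <;> by_cases h2 : n ∣ q <;> simp [h1, h2]
  rw [PowerSeries.coeff_mul, Finset.sum_congr rfl fun pq _ => hterm pq, Finset.sum_ite,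
    Finset.sum_const_zero, add_zero]
  by_cases hj : n ∣ j
  · rw [if_pos hj]
    refine Finset.sum_nbij' (i := fun ab : ℕ × ℕ => (n * ab.1, n * ab.2))
      (j := fun pq : ℕ × ℕ => (pq.1 / n, pq.2 / n)) ?_ ?_ ?_ ?_ ?_
    · rintro ⟨a, b⟩ hab
      simp only [Finset.HasAntidiagonal.mem_antidiagonal] at hab
      simp only [Finset.mem_filter, Finset.HasAntidiagonal.mem_antidiagonal]
      exact ⟨by rw [← Nat.mul_add, hab, Nat.mul_div_cancel' hj], ⟨a, rfl⟩, ⟨b, rfl⟩⟩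
    · rintro ⟨p, q⟩ hpq
      simp only [Finset.mem_filter, Finset.HasAntidiagonal.mem_antidiagonal] at hpq
      obtain ⟨hsum, ⟨a, rfl⟩, ⟨b, rfl⟩⟩ := hpq
      simp only [Finset.HasAntidiagonal.mem_antidiagonal, Nat.mul_div_cancel_left _ hn]
      rw [← hsum, ← Nat.mul_add, Nat.mul_div_cancel_left _ hn]
    · rintro ⟨a, b⟩ _
      simp [Nat.mul_div_cancel_left _ hn]
    · rintro ⟨p, q⟩ hpq
      simp only [Finset.mem_filter, Finset.HasAntidiagonal.mem_antidiagonal] at hpq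
      obtain ⟨_, hp, hq⟩ := hpq
      simp [Nat.mul_div_cancel' hp, Nat.mul_div_cancel' hq]
    · rintro ⟨a, b⟩ _
      simp [Nat.mul_div_cancel_left _ hn]
  · rw [if_neg hj]
    refine (Finset.sum_eq_zero ?_).symm
    rintro ⟨p, q⟩ hpq
    simp only [Finset.mem_filter, Finset.HasAntidiagonal.mem_antidiagonal] at hpq
    exact absurd (hpq.1 ▸ dvd_add hpq.2.1 hpq.2.2) hj

/-- Let `k` be a field, `n > 0` and `ζ ∈ k` a primitive `n`-th root of unity. The
`k`-algebra homomorphism `φ : k⟦t⟧ → k⟦x⟧` determined by `t ↦ xⁿ` is injective and its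
range is exactly the subalgebra of power series fixed by the rescaling `x ↦ ζx`; in
particular the invariant ring of the cyclic group generated by the rescaling is itself a
formal power series ring in one variable over `k`. -/
theorem powerSeries_nthPower_range_eq_rescale_fixed
    (k : Type*) [Field k] (n : ℕ) (hn : 0 < n) (ζ : k) (hζ : IsPrimitiveRoot ζ n) :
    ∃ φ : PowerSeries k →ₐ[k] PowerSeries k,
      (∀ (f : PowerSeries k) (j : ℕ),
        PowerSeries.coeff j (φ f) =
          if n ∣ j then PowerSeries.coeff (j / n) f else 0) ∧
      Function.Injective φ ∧
      Set.range ⇑φ = {f : PowerSeries k | PowerSeries.rescale ζ f = f} ∧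
      Nonempty (rescaleFixedSubalgebra k ζ ≃ₐ[k] PowerSeries k) := by
  classical
  have hone : phiFun k n 1 = 1 := by
    ext j
    rw [coeff_phiFun]
    simp only [PowerSeries.coeff_one]
    by_cases hj : n ∣ j
    · rw [if_pos hj]
      obtain ⟨c, rfl⟩ := hj
      rw [Nat.mul_div_cancel_left _ hn]
      by_cases hc : c = 0
      · simp [hc]
      · simp [hc, hn.ne', Nat.mul_eq_zero]
    · rw [if_neg hj, eq_comm, if_neg]
      rintro rfl
      exact hj (dvd_zero n)
  have hC : ∀ r : k, phiFun k n (PowerSeries.C r) = PowerSeries.C r := by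
    intro r
    ext j
    rw [coeff_phiFun]
    simp only [PowerSeries.coeff_C]
    by_cases hj : n ∣ j
    · rw [if_pos hj]
      obtain ⟨c, rfl⟩ := hj
      rw [Nat.mul_div_cancel_left _ hn]
      by_cases hc : c = 0
      · simp [hc]
      · simp [hc, hn.ne', Nat.mul_eq_zero]
    · rw [if_neg hj, eq_comm, if_neg]
      rintro rfl
      exact hj (dvd_zero n)
  let phi : PowerSeries k →ₐ[k] PowerSeries k :=
    { toFun := phiFun k n
      map_one' := hone
      map_mul' := phiFun_mul n hn
      map_zero' := by ext j; simp [coeff_phiFun]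
      map_add' := fun f g => by
        ext j
        simp only [coeff_phiFun, map_add]
        split_ifs <;> simp
      commutes' := fun r => by
        simpa [PowerSeries.algebraMap_apply] using hC r }
  have hcoeff : ∀ (f : PowerSeries k) (j : ℕ),
      PowerSeries.coeff j (phi f) =
        if n ∣ j then PowerSeries.coeff (j / n) f else 0 :=
    fun f j => coeff_phiFun n f j
  have hinj : Function.Injective phi := by
    intro f g hfg
    ext j
    have := congrArg (PowerSeries.coeff (n * j)) hfg
    rw [hcoeff, hcoeff, if_pos ⟨j, rfl⟩, if_pos ⟨j, rfl⟩,
      Nat.mul_div_cancel_left _ hn] at this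
    exact this
  have hrange : Set.range ⇑phi = {f : PowerSeries k | PowerSeries.rescale ζ f = f} := by
    ext f
    constructor
    · rintro ⟨g, rfl⟩
      show PowerSeries.rescale ζ (phi g) = phi g
      ext j
      rw [PowerSeries.coeff_rescale, hcoeff]
      by_cases hj : n ∣ j
      · rw [if_pos hj, (hζ.pow_eq_one_iff_dvd j).mpr hj, one_mul]
      · rw [if_neg hj, mul_zero]
    · intro hf
      refine ⟨PowerSeries.mk fun j => PowerSeries.coeff (n * j) f, ?_⟩
      ext j
      rw [hcoeff]
      by_cases hj : n ∣ j
      · rw [if_pos hj, PowerSeries.coeff_mk, Nat.mul_div_cancel' hj]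
      · rw [if_neg hj, eq_comm]
        have h1 : ζ ^ j * PowerSeries.coeff j f = PowerSeries.coeff j f := by
          conv_rhs => rw [← hf]
          rw [PowerSeries.coeff_rescale]
        have h2 : ζ ^ j ≠ 1 := fun h => hj ((hζ.pow_eq_one_iff_dvd j).mp h)
        by_contra h
        exact h2 (mul_right_cancel₀ h (h1.trans (one_mul _).symm))
  have heq : phi.range = rescaleFixedSubalgebra k ζ := by
    apply Subalgebra.ext
    intro f
    show f ∈ Set.range ⇑phi ↔ _
    rw [hrange]
    rfl
  refine ⟨phi, hcoeff, hinj, hrange, ?_⟩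
  exact ⟨((AlgEquiv.ofInjective phi hinj).trans (Subalgebra.equivOfEq _ _ heq)).symm⟩
end

section
/- Let k be a field, n a positive integer, ζ ∈ k a primitive n-th root of unity, and let A = k⟦x,y⟧/(xy). Let g be the k-algebra automorphism of A induced by x ↦ ζx, y ↦ ζ⁻¹y. Then the k-algebra homomorphism k⟦u,v⟧/(uv) → A determined by u ↦ xⁿ, v ↦ yⁿ is injective, and its range is exactly the subalgebra of elements of A fixed by g. In particular, the ring of invariants of the cyclic group generated by g acting on the complete local ring of a node is again the complete local ring of a node. -/
/-- The coefficientwise rescaling `x ↦ ζx`, `y ↦ ζ⁻¹y` on `k⟦x,y⟧` (with `x` the variable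
of index `0` and `y` the variable of index `1`). -/
noncomputable def nodeRescale (k : Type*) [Field k] (ζ : k) :
    MvPowerSeries (Fin 2) k → MvPowerSeries (Fin 2) k :=
  fun f d => ζ ^ (d 0) * ζ⁻¹ ^ (d 1) * MvPowerSeries.coeff d f

/-- The coefficientwise substitution `u ↦ xⁿ`, `v ↦ yⁿ` on `k⟦u,v⟧ → k⟦x,y⟧`. -/
noncomputable def nodePowerSubst (k : Type*) [Field k] (n : ℕ) :
    MvPowerSeries (Fin 2) k → MvPowerSeries (Fin 2) k :=
  fun f d =>
    if n ∣ d 0 ∧ n ∣ d 1 then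
      MvPowerSeries.coeff (Finsupp.single 0 (d 0 / n) + Finsupp.single 1 (d 1 / n)) f
    else 0

section NodeAux

open MvPowerSeries

variable {k : Type*} [Field k] {n : ℕ}

private lemma fin2_decomp (d : Fin 2 →₀ ℕ) :
    Finsupp.single 0 (d 0) + Finsupp.single 1 (d 1) = d := by
  ext i
  fin_cases i <;> simp [Finsupp.single_apply]

/-- Componentwise division by `n` of an exponent. -/
private noncomputable def ndiv (n : ℕ) (d : Fin 2 →₀ ℕ) : Fin 2 →₀ ℕ :=
  Finsupp.single 0 (d 0 / n) + Finsupp.single 1 (d 1 / n)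

private lemma ndiv_apply0 (d : Fin 2 →₀ ℕ) : ndiv n d 0 = d 0 / n := by
  simp [ndiv, Finsupp.single_apply]

private lemma ndiv_apply1 (d : Fin 2 →₀ ℕ) : ndiv n d 1 = d 1 / n := by
  simp [ndiv, Finsupp.single_apply]

private lemma smul_ndiv {d : Fin 2 →₀ ℕ} (h0 : n ∣ d 0) (h1 : n ∣ d 1) :
    n • ndiv n d = d := by
  ext i
  fin_cases i <;>
    simp [ndiv, Finsupp.single_apply, Nat.mul_div_cancel' h0, Nat.mul_div_cancel' h1]

private lemma ndiv_smul (hn : 0 < n) (a : Fin 2 →₀ ℕ) : ndiv n (n • a) = a := by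
  ext i
  fin_cases i <;> simp [ndiv, Finsupp.single_apply, Nat.mul_div_cancel_left _ hn]

private lemma smul_inj (hn : 0 < n) {a b : Fin 2 →₀ ℕ} (h : n • a = n • b) : a = b := by
  ext i
  have := DFunLike.congr_fun h i
  simp only [Finsupp.smul_apply, smul_eq_mul] at this
  exact Nat.eq_of_mul_eq_mul_left hn this

private lemma ndiv_eq_zero_iff (hn : 0 < n) {d : Fin 2 →₀ ℕ}
    (h0 : n ∣ d 0) (h1 : n ∣ d 1) : ndiv n d = 0 ↔ d = 0 := by
  constructor
  · intro h
    have := smul_ndiv h0 h1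
    rw [h, smul_zero] at this
    exact this.symm
  · rintro rfl
    simpa using ndiv_smul hn 0

private lemma coeff_nodePowerSubst (f : MvPowerSeries (Fin 2) k) (d : Fin 2 →₀ ℕ) :
    MvPowerSeries.coeff d (nodePowerSubst k n f) =
      if n ∣ d 0 ∧ n ∣ d 1 then MvPowerSeries.coeff (ndiv n d) f else 0 := rfl

private lemma coeff_nodeRescale (ζ : k) (f : MvPowerSeries (Fin 2) k) (d : Fin 2 →₀ ℕ) :
    MvPowerSeries.coeff d (nodeRescale k ζ f) =
      ζ ^ (d 0) * ζ⁻¹ ^ (d 1) * MvPowerSeries.coeff d f := rfl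

/-- Coefficientwise membership criterion for the ideal `(xy)`. -/
private lemma mem_node_ideal_iff (f : MvPowerSeries (Fin 2) k) :
    f ∈ Ideal.span {(MvPowerSeries.X 0 * MvPowerSeries.X 1 : MvPowerSeries (Fin 2) k)} ↔
      ∀ d : Fin 2 →₀ ℕ, (d 0 = 0 ∨ d 1 = 0) → MvPowerSeries.coeff d f = 0 := by
  classical
  have hXX : (MvPowerSeries.X 0 * MvPowerSeries.X 1 : MvPowerSeries (Fin 2) k) =
      MvPowerSeries.monomial (Finsupp.single 0 1 + Finsupp.single 1 1) 1 := by
    rw [MvPowerSeries.X_def, MvPowerSeries.X_def, MvPowerSeries.monomial_mul_monomial, one_mul]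
  set e : Fin 2 →₀ ℕ := Finsupp.single 0 1 + Finsupp.single 1 1 with he
  have he0 : e 0 = 1 := by simp [he, Finsupp.single_apply]
  have he1 : e 1 = 1 := by simp [he, Finsupp.single_apply]
  have hle : ∀ d : Fin 2 →₀ ℕ, e ≤ d ↔ (d 0 ≠ 0 ∧ d 1 ≠ 0) := by
    intro d
    rw [Finsupp.le_def]
    constructor
    · intro h
      constructor
      · have := h 0; omega
      · have := h 1; omega
    · rintro ⟨h0, h1⟩ i
      fin_cases i
      · simpa [he0] using Nat.one_le_iff_ne_zero.mpr h0
      · simpa [he1] using Nat.one_le_iff_ne_zero.mpr h1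
  constructor
  · intro hf d hd
    rw [Ideal.mem_span_singleton] at hf
    obtain ⟨c, rfl⟩ := hf
    rw [hXX, MvPowerSeries.coeff_monomial_mul, if_neg]
    rw [hle]
    tauto
  · intro h
    rw [Ideal.mem_span_singleton]
    refine ⟨(fun d => MvPowerSeries.coeff (d + e) f : MvPowerSeries (Fin 2) k), ?_⟩
    apply MvPowerSeries.ext
    intro d
    erw [hXX, MvPowerSeries.coeff_monomial_mul]
    by_cases hd : e ≤ d
    · rw [if_pos hd, one_mul]
      show MvPowerSeries.coeff d f = MvPowerSeries.coeff ((d - e) + e) f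
      rw [tsub_add_cancel_of_le hd]
    · rw [if_neg hd, h d]
      rw [hle] at hd
      tauto

set_option maxHeartbeats 2000000 in
/-- `nodePowerSubst` as a `k`-algebra homomorphism. -/
private noncomputable def nodeSubstHom (k : Type*) [Field k] (n : ℕ) (hn : 0 < n) :
    MvPowerSeries (Fin 2) k →ₐ[k] MvPowerSeries (Fin 2) k where
  toFun := nodePowerSubst k n
  map_zero' := by
    apply MvPowerSeries.ext
    intro d
    rw [coeff_nodePowerSubst]
    simp
  map_add' f g := by
    apply MvPowerSeries.ext
    intro d
    simp only [coeff_nodePowerSubst, map_add]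
    split <;> simp
  map_one' := by
    apply MvPowerSeries.ext
    intro d
    rw [coeff_nodePowerSubst]
    by_cases hc : n ∣ d 0 ∧ n ∣ d 1
    · rw [if_pos hc, MvPowerSeries.coeff_one, MvPowerSeries.coeff_one,
        if_congr (ndiv_eq_zero_iff hn hc.1 hc.2) rfl rfl]
    · have hd : d ≠ 0 := by rintro rfl; exact hc ⟨dvd_zero n, dvd_zero n⟩
      rw [if_neg hc, MvPowerSeries.coeff_one, if_neg hd]
  map_mul' f g := by
    apply MvPowerSeries.ext
    intro d
    rw [MvPowerSeries.coeff_mul, coeff_nodePowerSubst]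
    by_cases hc : n ∣ d 0 ∧ n ∣ d 1
    · rw [if_pos hc, MvPowerSeries.coeff_mul]
      refine Finset.sum_bij_ne_zero (fun q _ _ => (n • q.1, n • q.2)) ?_ ?_ ?_ ?_
      · intro q hq _
        rw [Finset.HasAntidiagonal.mem_antidiagonal] at hq ⊢
        rw [← smul_add, hq, smul_ndiv hc.1 hc.2]
      · intro q₁ _ _ q₂ _ _ h
        rw [Prod.mk.injEq] at h
        exact Prod.ext (smul_inj hn h.1) (smul_inj hn h.2)
      · intro p hp hne
        have hf : MvPowerSeries.coeff p.1 (nodePowerSubst k n f) ≠ 0 :=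
          left_ne_zero_of_mul hne
        have hg : MvPowerSeries.coeff p.2 (nodePowerSubst k n g) ≠ 0 :=
          right_ne_zero_of_mul hne
        have hc1 : n ∣ p.1 0 ∧ n ∣ p.1 1 := by
          by_contra hcon
          rw [coeff_nodePowerSubst, if_neg hcon] at hf
          exact hf rfl
        have hc2 : n ∣ p.2 0 ∧ n ∣ p.2 1 := by
          by_contra hcon
          rw [coeff_nodePowerSubst, if_neg hcon] at hg
          exact hg rfl
        rw [coeff_nodePowerSubst, if_pos hc1] at hf
        rw [coeff_nodePowerSubst, if_pos hc2] at hg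
        rw [Finset.HasAntidiagonal.mem_antidiagonal] at hp
        refine ⟨(ndiv n p.1, ndiv n p.2), ?_, ?_, ?_⟩
        · rw [Finset.HasAntidiagonal.mem_antidiagonal]
          apply smul_inj hn
          rw [smul_add, smul_ndiv hc1.1 hc1.2, smul_ndiv hc2.1 hc2.2, hp,
            smul_ndiv hc.1 hc.2]
        · exact mul_ne_zero hf hg
        · rw [Prod.mk.injEq]
          exact ⟨smul_ndiv hc1.1 hc1.2, smul_ndiv hc2.1 hc2.2⟩
      · intro q _ _
        have h1 : n ∣ (n • q.1) 0 ∧ n ∣ (n • q.1) 1 := by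
          constructor <;> simp [Finsupp.smul_apply]
        have h2 : n ∣ (n • q.2) 0 ∧ n ∣ (n • q.2) 1 := by
          constructor <;> simp [Finsupp.smul_apply]
        rw [coeff_nodePowerSubst, coeff_nodePowerSubst, if_pos h1, if_pos h2,
          ndiv_smul hn, ndiv_smul hn]
    · rw [if_neg hc]
      symm
      apply Finset.sum_eq_zero
      intro p hp
      rw [Finset.HasAntidiagonal.mem_antidiagonal] at hp
      by_contra hne
      have hf : MvPowerSeries.coeff p.1 (nodePowerSubst k n f) ≠ 0 :=
        left_ne_zero_of_mul hne
      have hg : MvPowerSeries.coeff p.2 (nodePowerSubst k n g) ≠ 0 :=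
        right_ne_zero_of_mul hne
      have hc1 : n ∣ p.1 0 ∧ n ∣ p.1 1 := by
        by_contra hcon
        rw [coeff_nodePowerSubst, if_neg hcon] at hf
        exact hf rfl
      have hc2 : n ∣ p.2 0 ∧ n ∣ p.2 1 := by
        by_contra hcon
        rw [coeff_nodePowerSubst, if_neg hcon] at hg
        exact hg rfl
      refine hc ⟨?_, ?_⟩
      · have : d 0 = p.1 0 + p.2 0 := by rw [← hp]; rfl
        rw [this]; exact dvd_add hc1.1 hc2.1
      · have : d 1 = p.1 1 + p.2 1 := by rw [← hp]; rfl
        rw [this]; exact dvd_add hc1.2 hc2.2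
  commutes' c := by
    apply MvPowerSeries.ext
    intro d
    rw [← MvPowerSeries.c_eq_algebraMap, coeff_nodePowerSubst]
    by_cases hc : n ∣ d 0 ∧ n ∣ d 1
    · rw [if_pos hc, MvPowerSeries.coeff_C, MvPowerSeries.coeff_C,
        if_congr (ndiv_eq_zero_iff hn hc.1 hc.2) rfl rfl]
    · have hd : d ≠ 0 := by rintro rfl; exact hc ⟨dvd_zero n, dvd_zero n⟩
      rw [if_neg hc, MvPowerSeries.coeff_C, if_neg hd]

end NodeAux

/-- Let `k` be a field, `n > 0`, `ζ` a primitive `n`-th root of unity and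
`A = k⟦x,y⟧/(xy)` the complete local ring of a node. Let `g` be the `k`-algebra
automorphism of `A` induced by `x ↦ ζx`, `y ↦ ζ⁻¹y`. Then the `k`-algebra homomorphism
`k⟦u,v⟧/(uv) → A` determined by `u ↦ xⁿ`, `v ↦ yⁿ` is injective with range exactly the
subalgebra of elements fixed by `g`: the invariant ring of the cyclic group generated by
`g` is again the complete local ring of a node. -/
theorem node_cyclic_invariants
    (k : Type*) [Field k] (n : ℕ) (hn : 0 < n) (ζ : k) (hζ : IsPrimitiveRoot ζ n)
    (I : Ideal (MvPowerSeries (Fin 2) k))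
    (hI : I = Ideal.span {MvPowerSeries.X 0 * MvPowerSeries.X 1})
    (g : (MvPowerSeries (Fin 2) k ⧸ I) ≃ₐ[k] (MvPowerSeries (Fin 2) k ⧸ I))
    (hg : ∀ f : MvPowerSeries (Fin 2) k,
      g (Ideal.Quotient.mk I f) = Ideal.Quotient.mk I (nodeRescale k ζ f)) :
    ∃ Φ : (MvPowerSeries (Fin 2) k ⧸ I) →ₐ[k] (MvPowerSeries (Fin 2) k ⧸ I),
      (∀ f : MvPowerSeries (Fin 2) k,
        Φ (Ideal.Quotient.mk I f) = Ideal.Quotient.mk I (nodePowerSubst k n f)) ∧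
      Function.Injective Φ ∧
      Set.range ⇑Φ = {a : MvPowerSeries (Fin 2) k ⧸ I | g a = a} := by
  classical
  subst hI
  set J : Ideal (MvPowerSeries (Fin 2) k) :=
    Ideal.span {MvPowerSeries.X 0 * MvPowerSeries.X 1} with hJ
  set S : MvPowerSeries (Fin 2) k →ₐ[k] MvPowerSeries (Fin 2) k := nodeSubstHom k n hn with hSdef
  have hS : ∀ f, S f = nodePowerSubst k n f := fun _ => rfl
  have hsm : ∀ (a : Fin 2 →₀ ℕ) (i : Fin 2), (n • a) i = n * a i := fun a i => by simp
  -- the lift is well-defined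
  have hker : ∀ a ∈ J, ((Ideal.Quotient.mkₐ k J).comp S) a = 0 := by
    intro a ha
    simp only [AlgHom.comp_apply, Ideal.Quotient.mkₐ_eq_mk, Ideal.Quotient.eq_zero_iff_mem]
    rw [hJ, mem_node_ideal_iff]
    intro d hd
    rw [hS, coeff_nodePowerSubst]
    split
    case isTrue hc =>
      apply (mem_node_ideal_iff a).mp ha
      rcases hd with h0 | h1
      · left; rw [ndiv_apply0, h0, Nat.zero_div]
      · right; rw [ndiv_apply1, h1, Nat.zero_div]
    case isFalse => rfl
  refine ⟨Ideal.Quotient.liftₐ J ((Ideal.Quotient.mkₐ k J).comp S) hker, ?_, ?_, ?_⟩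
  case refine_1 =>
    intro f
    show ((Ideal.Quotient.mkₐ k J).comp S) f = _
    exact congrArg (Ideal.Quotient.mk J) (hS f)
  all_goals
    have h1 : ∀ f, Ideal.Quotient.liftₐ J ((Ideal.Quotient.mkₐ k J).comp S) hker
        (Ideal.Quotient.mk J f) = Ideal.Quotient.mk J (nodePowerSubst k n f) := by
      intro f
      show ((Ideal.Quotient.mkₐ k J).comp S) f = _
      exact congrArg (Ideal.Quotient.mk J) (hS f)
  case refine_2 =>
    rw [injective_iff_map_eq_zero]
    intro a ha
    obtain ⟨f, rfl⟩ := Ideal.Quotient.mk_surjective a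
    rw [h1 f, Ideal.Quotient.eq_zero_iff_mem, mem_node_ideal_iff] at ha
    rw [Ideal.Quotient.eq_zero_iff_mem, mem_node_ideal_iff]
    intro d hd
    have hcond : n ∣ (n • d) 0 ∧ n ∣ (n • d) 1 := by
      constructor <;> rw [hsm] <;> exact dvd_mul_right n _
    have hd' : (n • d) 0 = 0 ∨ (n • d) 1 = 0 := by
      rcases hd with h0 | h1
      · left; rw [hsm, h0, Nat.mul_zero]
      · right; rw [hsm, h1, Nat.mul_zero]
    have key := ha (n • d) hd'
    rw [coeff_nodePowerSubst, if_pos hcond, ndiv_smul hn] at key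
    exact key
  case refine_3 =>
    apply Set.Subset.antisymm
    · rintro a ⟨b, rfl⟩
      obtain ⟨h, rfl⟩ := Ideal.Quotient.mk_surjective b
      rw [Set.mem_setOf_eq, h1 h, hg]
      congr 1
      apply MvPowerSeries.ext
      intro d
      rw [coeff_nodeRescale]
      by_cases hc : n ∣ d 0 ∧ n ∣ d 1
      · rw [(hζ.pow_eq_one_iff_dvd _).mpr hc.1, (hζ.inv.pow_eq_one_iff_dvd _).mpr hc.2,
          one_mul, one_mul]
      · rw [coeff_nodePowerSubst, if_neg hc, mul_zero]
    · intro a ha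
      obtain ⟨f, rfl⟩ := Ideal.Quotient.mk_surjective a
      rw [Set.mem_setOf_eq, hg f, Ideal.Quotient.eq, mem_node_ideal_iff] at ha
      have hfix : ∀ d : Fin 2 →₀ ℕ, (d 0 = 0 ∨ d 1 = 0) →
          ζ ^ (d 0) * ζ⁻¹ ^ (d 1) * MvPowerSeries.coeff d f = MvPowerSeries.coeff d f := by
        intro d hd
        have := ha d hd
        rw [map_sub, coeff_nodeRescale] at this
        exact sub_eq_zero.mp this
      refine ⟨Ideal.Quotient.mk J (fun e => MvPowerSeries.coeff (n • e) f : MvPowerSeries (Fin 2) k), ?_⟩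
      erw [h1, Ideal.Quotient.eq, mem_node_ideal_iff]
      intro d hd
      rw [map_sub]
      by_cases hc : n ∣ d 0 ∧ n ∣ d 1
      · have heq : MvPowerSeries.coeff d
            (nodePowerSubst k n (fun e => MvPowerSeries.coeff (n • e) f)) =
            MvPowerSeries.coeff d f := by
          erw [coeff_nodePowerSubst, if_pos hc]
          show MvPowerSeries.coeff (n • ndiv n d) f = _
          rw [smul_ndiv hc.1 hc.2]
        rw [heq, sub_self]
      · have hzero : MvPowerSeries.coeff d f = 0 := by
          by_contra hne
          rcases hd with h0 | h1
          · have hdvd : ¬ n ∣ d 1 := fun hdv => hc ⟨h0 ▸ dvd_zero n, hdv⟩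
            have heq := hfix d (Or.inl h0)
            rw [h0, pow_zero, one_mul] at heq
            exact hdvd ((hζ.inv.pow_eq_one_iff_dvd _).mp
              (mul_right_cancel₀ hne (heq.trans (one_mul _).symm)))
          · have hdvd : ¬ n ∣ d 0 := fun hdv => hc ⟨hdv, h1 ▸ dvd_zero n⟩
            have heq := hfix d (Or.inr h1)
            rw [h1, pow_zero, mul_one] at heq
            exact hdvd ((hζ.pow_eq_one_iff_dvd _).mp
              (mul_right_cancel₀ hne (heq.trans (one_mul _).symm)))
        erw [coeff_nodePowerSubst, if_neg hc, hzero, sub_zero]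
end

section
/- Let k be a field and H a finite subgroup of GL₂(k) such that: every element of H is either a diagonal matrix or an antidiagonal matrix (i.e., has both diagonal entries zero); every diagonal element h of H satisfies h₀₀ · h₁₁ = 1; and every antidiagonal element of H squares to the identity. Then H is either a cyclic group, or H is isomorphic to the dihedral group DihedralGroup n of order 2n for some positive integer n. (This is the group-theoretic content of the classification of admissible stabilisers at a node: the stabiliser, acting with the two characters of the branches inverse to each other and with branch-exchanging elements of order at most 2, is cyclic or dihedral.) -/
open Matrix

private lemma glmul_apply {k : Type*} [Field k] (u v : GL (Fin 2) k) (i j : Fin 2) :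
    ((u * v : GL (Fin 2) k) : Matrix (Fin 2) (Fin 2) k) i j
      = (u : Matrix (Fin 2) (Fin 2) k) i 0 * (v : Matrix (Fin 2) (Fin 2) k) 0 j
        + (u : Matrix (Fin 2) (Fin 2) k) i 1 * (v : Matrix (Fin 2) (Fin 2) k) 1 j := by
  show ((u : Matrix (Fin 2) (Fin 2) k) * (v : Matrix (Fin 2) (Fin 2) k)) i j = _
  rw [Matrix.mul_apply, Fin.sum_univ_two]

private lemma gl_one_apply {k : Type*} [Field k] (i j : Fin 2) :
    ((1 : GL (Fin 2) k) : Matrix (Fin 2) (Fin 2) k) i j = if i = j then 1 else 0 := by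
  rw [Units.val_one, Matrix.one_apply]

private lemma gl_ext {k : Type*} [Field k] {u v : GL (Fin 2) k}
    (h00 : (u : Matrix (Fin 2) (Fin 2) k) 0 0 = (v : Matrix (Fin 2) (Fin 2) k) 0 0)
    (h01 : (u : Matrix (Fin 2) (Fin 2) k) 0 1 = (v : Matrix (Fin 2) (Fin 2) k) 0 1)
    (h10 : (u : Matrix (Fin 2) (Fin 2) k) 1 0 = (v : Matrix (Fin 2) (Fin 2) k) 1 0)
    (h11 : (u : Matrix (Fin 2) (Fin 2) k) 1 1 = (v : Matrix (Fin 2) (Fin 2) k) 1 1) :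
    u = v := by
  apply Units.ext
  apply Matrix.ext
  intro i j
  fin_cases i <;> fin_cases j <;> assumption

/-- The subgroup of diagonal elements. -/
private def diagSub {k : Type*} [Field k] (H : Subgroup (GL (Fin 2) k)) : Subgroup H where
  carrier := {h | ((h : GL (Fin 2) k) : Matrix (Fin 2) (Fin 2) k) 0 1 = 0 ∧
                  ((h : GL (Fin 2) k) : Matrix (Fin 2) (Fin 2) k) 1 0 = 0}
  one_mem' := by
    constructor <;> simp [Units.val_one, Matrix.one_apply]
  mul_mem' := by
    rintro a b ⟨ha1, ha2⟩ ⟨hb1, hb2⟩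
    constructor <;>
      simp_all [MulMemClass.coe_mul, glmul_apply]
  inv_mem' := by
    rintro a ⟨ha1, ha2⟩
    have key : (((a⁻¹ : H) : GL (Fin 2) k) : Matrix (Fin 2) (Fin 2) k)
        = ((a : GL (Fin 2) k) : Matrix (Fin 2) (Fin 2) k)⁻¹ := by
      rw [← Matrix.coe_units_inv]
      norm_cast
    constructor <;>
      rw [key, Matrix.inv_def, Matrix.adjugate_fin_two] <;>
      simp [ha1, ha2]

private lemma cyclic_aux {k : Type*} [Field k] {G : Type*} [Group G] [Finite G]
    (f : G →* GL (Fin 2) k) (hinj : Function.Injective f)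
    (h01 : ∀ g, ((f g : GL (Fin 2) k) : Matrix (Fin 2) (Fin 2) k) 0 1 = 0)
    (h10 : ∀ g, ((f g : GL (Fin 2) k) : Matrix (Fin 2) (Fin 2) k) 1 0 = 0)
    (hdet : ∀ g, ((f g : GL (Fin 2) k) : Matrix (Fin 2) (Fin 2) k) 0 0 *
      ((f g : GL (Fin 2) k) : Matrix (Fin 2) (Fin 2) k) 1 1 = 1) : IsCyclic G := by
  let ψ : G →* k :=
    { toFun := fun g => ((f g : GL (Fin 2) k) : Matrix (Fin 2) (Fin 2) k) 0 0
      map_one' := by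
        show ((f 1 : GL (Fin 2) k) : Matrix (Fin 2) (Fin 2) k) 0 0 = 1
        rw [_root_.map_one f]
        rw [gl_one_apply]
        simp
      map_mul' := by
        intro a b
        show ((f (a * b) : GL (Fin 2) k) : Matrix (Fin 2) (Fin 2) k) 0 0 = _
        rw [_root_.map_mul f, glmul_apply, h01 a]
        ring }
  apply isCyclic_of_subgroup_isDomain (R := k) ψ
  intro a b hab
  have h00 : ((f a : GL (Fin 2) k) : Matrix (Fin 2) (Fin 2) k) 0 0
      = ((f b : GL (Fin 2) k) : Matrix (Fin 2) (Fin 2) k) 0 0 := hab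
  have hne : ((f a : GL (Fin 2) k) : Matrix (Fin 2) (Fin 2) k) 0 0 ≠ 0 := by
    intro h0
    have := hdet a
    rw [h0, zero_mul] at this
    exact zero_ne_one this
  have h11 : ((f a : GL (Fin 2) k) : Matrix (Fin 2) (Fin 2) k) 1 1
      = ((f b : GL (Fin 2) k) : Matrix (Fin 2) (Fin 2) k) 1 1 := by
    have ha := hdet a
    have hb := hdet b
    rw [← h00] at hb
    apply mul_left_cancel₀ hne
    rw [ha, hb]
  apply hinj
  exact gl_ext h00 ((h01 a).trans (h01 b).symm) ((h10 a).trans (h10 b).symm) h11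

/-- Let `k` be a field and `H` a finite subgroup of `GL₂(k)` such that every element is
diagonal or antidiagonal, every diagonal element `h` satisfies `h₀₀ * h₁₁ = 1`, and every
antidiagonal element squares to the identity. Then `H` is cyclic or dihedral. -/
theorem finite_subgroup_GL2_diag_antidiag_cyclic_or_dihedral
    (k : Type*) [Field k] (H : Subgroup (GL (Fin 2) k)) [Finite H]
    (hdiag_or_anti : ∀ h ∈ H,
      (((h : GL (Fin 2) k) : Matrix (Fin 2) (Fin 2) k) 0 1 = 0 ∧
        ((h : GL (Fin 2) k) : Matrix (Fin 2) (Fin 2) k) 1 0 = 0) ∨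
      (((h : GL (Fin 2) k) : Matrix (Fin 2) (Fin 2) k) 0 0 = 0 ∧
        ((h : GL (Fin 2) k) : Matrix (Fin 2) (Fin 2) k) 1 1 = 0))
    (hdiag : ∀ h ∈ H,
      (((h : GL (Fin 2) k) : Matrix (Fin 2) (Fin 2) k) 0 1 = 0 ∧
        ((h : GL (Fin 2) k) : Matrix (Fin 2) (Fin 2) k) 1 0 = 0) →
      ((h : GL (Fin 2) k) : Matrix (Fin 2) (Fin 2) k) 0 0 *
        ((h : GL (Fin 2) k) : Matrix (Fin 2) (Fin 2) k) 1 1 = 1)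
    (hanti : ∀ h ∈ H,
      (((h : GL (Fin 2) k) : Matrix (Fin 2) (Fin 2) k) 0 0 = 0 ∧
        ((h : GL (Fin 2) k) : Matrix (Fin 2) (Fin 2) k) 1 1 = 0) →
      h ^ 2 = 1) :
    IsCyclic H ∨ ∃ n : ℕ, 0 < n ∧ Nonempty (H ≃* DihedralGroup n) := by
  classical
  have mulH : ∀ (a b : H) (i j : Fin 2),
      (((a * b : H) : GL (Fin 2) k) : Matrix (Fin 2) (Fin 2) k) i j
        = ((a : GL (Fin 2) k) : Matrix (Fin 2) (Fin 2) k) i 0 *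
            ((b : GL (Fin 2) k) : Matrix (Fin 2) (Fin 2) k) 0 j
          + ((a : GL (Fin 2) k) : Matrix (Fin 2) (Fin 2) k) i 1 *
            ((b : GL (Fin 2) k) : Matrix (Fin 2) (Fin 2) k) 1 j := by
    intro a b i j
    rw [MulMemClass.coe_mul]
    exact glmul_apply _ _ i j
  by_cases hD : ∀ h : H, h ∈ diagSub H
  · left
    refine cyclic_aux H.subtype Subtype.coe_injective ?_ ?_ ?_
    · exact fun h => (hD h).1
    · exact fun h => (hD h).2
    · exact fun h => hdiag (h : GL (Fin 2) k) h.2 ⟨(hD h).1, (hD h).2⟩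
  · right
    push_neg at hD
    obtain ⟨s, hs⟩ := hD
    have hs_anti : ((s : GL (Fin 2) k) : Matrix (Fin 2) (Fin 2) k) 0 0 = 0 ∧
        ((s : GL (Fin 2) k) : Matrix (Fin 2) (Fin 2) k) 1 1 = 0 := by
      rcases hdiag_or_anti (s : GL (Fin 2) k) s.2 with h | h
      · exact absurd h hs
      · exact h
    have hss : s * s = 1 := by
      have h2 : ((s : GL (Fin 2) k)) ^ 2 = 1 := hanti (s : GL (Fin 2) k) s.2 hs_anti
      apply Subtype.ext
      rw [MulMemClass.coe_mul, OneMemClass.coe_one, ← sq]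
      exact h2
    have hA : ((s : GL (Fin 2) k) : Matrix (Fin 2) (Fin 2) k) 0 1 *
        ((s : GL (Fin 2) k) : Matrix (Fin 2) (Fin 2) k) 1 0 = 1 := by
      have e : (((s * s : H) : GL (Fin 2) k) : Matrix (Fin 2) (Fin 2) k) 0 0 = 1 := by
        rw [hss, OneMemClass.coe_one, gl_one_apply]
        simp
      rw [mulH, hs_anti.1] at e
      linear_combination e
    have conj_rel : ∀ d : H, d ∈ diagSub H → s * d * s = d⁻¹ := by
      intro d hd
      obtain ⟨hd1, hd2⟩ := hd
      have hE00 : (((s * d * s : H) : GL (Fin 2) k) : Matrix (Fin 2) (Fin 2) k) 0 0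
          = ((d : GL (Fin 2) k) : Matrix (Fin 2) (Fin 2) k) 1 1 := by
        simp only [mulH, hs_anti.1, hs_anti.2, hd1, hd2]
        linear_combination ((d : GL (Fin 2) k) : Matrix (Fin 2) (Fin 2) k) 1 1 * hA
      have hE01 : (((s * d * s : H) : GL (Fin 2) k) : Matrix (Fin 2) (Fin 2) k) 0 1
          = 0 := by
        simp only [mulH, hs_anti.1, hs_anti.2, hd1, hd2]
        ring
      have hE10 : (((s * d * s : H) : GL (Fin 2) k) : Matrix (Fin 2) (Fin 2) k) 1 0
          = 0 := by
        simp only [mulH, hs_anti.1, hs_anti.2, hd1, hd2]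
        ring
      have hE11 : (((s * d * s : H) : GL (Fin 2) k) : Matrix (Fin 2) (Fin 2) k) 1 1
          = ((d : GL (Fin 2) k) : Matrix (Fin 2) (Fin 2) k) 0 0 := by
        simp only [mulH, hs_anti.1, hs_anti.2, hd1, hd2]
        linear_combination ((d : GL (Fin 2) k) : Matrix (Fin 2) (Fin 2) k) 0 0 * hA
      have hdet := hdiag (d : GL (Fin 2) k) d.2 ⟨hd1, hd2⟩
      have key : d * (s * d * s) = 1 := by
        apply Subtype.ext
        rw [OneMemClass.coe_one]
        apply gl_ext
        · rw [mulH, hE00, hE10, hd1, gl_one_apply]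
          norm_num
          linear_combination hdet
        · rw [mulH, hE01, hE11, hd1, gl_one_apply]
          norm_num
        · rw [mulH, hE00, hE10, hd2, gl_one_apply]
          norm_num
        · rw [mulH, hE01, hE11, hd2, gl_one_apply]
          norm_num
          linear_combination hdet
      exact (inv_eq_of_mul_eq_one_right key).symm
    haveI : IsCyclic (diagSub H) := by
      refine cyclic_aux (H.subtype.comp (diagSub H).subtype)
        (Subtype.coe_injective.comp Subtype.coe_injective) ?_ ?_ ?_
      · exact fun g => g.2.1
      · exact fun g => g.2.2
      · exact fun g => hdiag _ (g : H).2 ⟨g.2.1, g.2.2⟩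
    obtain ⟨g, hg⟩ := IsCyclic.exists_generator (α := diagSub H)
    set G : H := ((g : H)) with hGdef
    have hn : 0 < orderOf G := orderOf_pos G
    haveI : NeZero (orderOf G) := ⟨hn.ne'⟩
    set z : ZMod (orderOf G) → H := fun i => G ^ i.val with hzdef
    have zmem : ∀ i : ZMod (orderOf G), z i ∈ diagSub H := fun i => pow_mem g.2 i.val
    have zadd : ∀ i j : ZMod (orderOf G), z (i + j) = z i * z j := by
      intro i j
      show G ^ (i + j).val = G ^ i.val * G ^ j.val
      rw [ZMod.val_add, pow_mod_orderOf, pow_add]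
    have zzero : z 0 = 1 := by
      show G ^ (0 : ZMod (orderOf G)).val = 1
      rw [ZMod.val_zero, pow_zero]
    have zneg : ∀ i : ZMod (orderOf G), z (-i) = (z i)⁻¹ := by
      intro i
      have : z (-i) * z i = 1 := by rw [← zadd, neg_add_cancel, zzero]
      exact eq_inv_of_mul_eq_one_left this
    have zint : ∀ m : ℤ, z ((m : ZMod (orderOf G))) = G ^ m := by
      intro m
      show G ^ ((m : ZMod (orderOf G))).val = G ^ m
      rw [← zpow_natCast, zpow_eq_zpow_iff_modEq, ZMod.val_intCast]
      exact Int.emod_emod_of_dvd m dvd_rfl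
    have srel' : ∀ i : ZMod (orderOf G), z i * s = s * (z i)⁻¹ := by
      intro i
      have h1 : s * (z i)⁻¹ * s = z i := by
        rw [conj_rel _ (inv_mem (zmem i)), inv_inv]
      calc z i * s = s * (z i)⁻¹ * s * s := by rw [h1]
        _ = s * (z i)⁻¹ * (s * s) := by group
        _ = s * (z i)⁻¹ := by rw [hss, mul_one]
    let f0 : DihedralGroup (orderOf G) → H := fun x =>
      match x with
      | .r i => z i
      | .sr i => s * z i
    have hf : ∀ x y : DihedralGroup (orderOf G), f0 (x * y) = f0 x * f0 y := by
      rintro (i | i) (j | j)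
      · show z (i + j) = z i * z j
        exact zadd i j
      · show s * z (j - i) = z i * (s * z j)
        rw [← mul_assoc, srel' i, mul_assoc, ← zneg, ← zadd]
        congr 1
        ring
      · show s * z (i + j) = s * z i * z j
        rw [zadd, mul_assoc]
      · show z (j - i) = s * z i * (s * z j)
        have e : s * z i * (s * z j) = (s * z i * s) * z j := by group
        rw [e, conj_rel _ (zmem i), ← zneg, ← zadd]
        congr 1
        ring
    let f : DihedralGroup (orderOf G) →* H := MonoidHom.mk' f0 hf
    have hinj : Function.Injective f := by
      rw [injective_iff_map_eq_one]
      rintro (i | i) h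
      · have h' : G ^ i.val = 1 := h
        have hdvd : orderOf G ∣ i.val := orderOf_dvd_of_pow_eq_one h'
        have hv : i.val = 0 := Nat.eq_zero_of_dvd_of_lt hdvd (ZMod.val_lt i)
        have : i = 0 := (ZMod.val_eq_zero i).mp hv
        rw [this]
        rfl
      · exfalso
        have h' : s * z i = 1 := h
        have he : s = (z i)⁻¹ := eq_inv_of_mul_eq_one_left h'
        apply hs
        rw [he]
        exact inv_mem (zmem i)
    have hsurj : Function.Surjective f := by
      intro h
      rcases hdiag_or_anti (h : GL (Fin 2) k) h.2 with hd | ha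
      · have hmem : h ∈ diagSub H := ⟨hd.1, hd.2⟩
        obtain ⟨m, hm⟩ := Subgroup.mem_zpowers_iff.mp (hg ⟨h, hmem⟩)
        refine ⟨.r ((m : ZMod (orderOf G))), ?_⟩
        show z ((m : ZMod (orderOf G))) = h
        rw [zint]
        rw [hGdef]
        have := congrArg (fun x : diagSub H => (x : H)) hm
        simpa using this
      · have hmem : s * h ∈ diagSub H := by
          constructor
          · rw [mulH, hs_anti.1, ha.2]
            ring
          · rw [mulH, hs_anti.2, ha.1]
            ring
        obtain ⟨m, hm⟩ := Subgroup.mem_zpowers_iff.mp (hg ⟨s * h, hmem⟩)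
        refine ⟨.sr ((m : ZMod (orderOf G))), ?_⟩
        show s * z ((m : ZMod (orderOf G))) = h
        rw [zint]
        have hG : G ^ m = s * h := by
          rw [hGdef]
          simpa using congrArg (fun x : diagSub H => (x : H)) hm
        rw [hG, ← mul_assoc, hss, one_mul]
    exact ⟨orderOf G, hn, ⟨(MulEquiv.ofBijective f ⟨hinj, hsurj⟩).symm⟩⟩
end

section
/- Let k be a field, E a finite set, bar : E → E a fixed-point-free involution (bar(bar e) = e and bar e ≠ e for all e), and g : E → E a bijection commuting with bar. Let M be the quotient of the free k-module on E by the submodule generated by the elements e + bar e for e ∈ E, and let g also denote the induced k-linear endomorphism of M. Then M is a free k-module of rank (card E)/2, and 2 · trace(g on M) = card {e ∈ E : g e = e} − card {e ∈ E : g e = bar e}, as an equality in k (with the cardinalities viewed in k via the natural map ℕ → k). (This computes the character of a group acting on the 1-chains of a graph: each orbit of edges contributes +1 for an edge fixed with its orientation and −1 for an edge fixed with orientation reversed, i.e., the signum character.) -/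
/-!
Choosing one orientation `p.out` of every pair `p = {e, bar e}` identifies the 1-chains with
`k`-valued functions on the set of pairs: the chain of `e` goes to `±1` at its pair, with sign `+`
exactly when `e` is the chosen orientation. In this basis the diagonal entry of `g` at a pair is
`+1` if `g` fixes its chosen edge, `-1` if `g` reverses it, and `0` otherwise. Since `g` commutes
with `bar`, both conditions are constant on pairs, and each pair contributes two edges to the
cardinalities on the right-hand side.
-/

open Finsupp Function

section Chains

variable (k : Type*) [CommRing k] {E : Type*} {f : E → E}

noncomputable def chainRelations (f : E → E) : Submodule k (E →₀ k) :=
  Submodule.span k {x | ∃ e, x = single e 1 + single (f e) 1}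

theorem chainRelations.single_add_single_mem (e : E) (c : k) :
    single e c + single (f e) c ∈ chainRelations k f := by
  have h : single e 1 + single (f e) 1 ∈ chainRelations k f := Submodule.subset_span ⟨e, rfl⟩
  simpa [smul_add] using Submodule.smul_mem _ c h

theorem chainRelations.mk_single_apply (e : E) (c : k) :
    (Submodule.Quotient.mk (single (f e) c) : (E →₀ k) ⧸ chainRelations k f) =
      -Submodule.Quotient.mk (single e c) := by
  rw [eq_neg_iff_add_eq_zero, ← Submodule.Quotient.mk_add, Submodule.Quotient.mk_eq_zero,
    add_comm]
  exact chainRelations.single_add_single_mem k e c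

end Chains

namespace Function.Involutive

variable {E : Type*} {f : E → E}

def orbitSetoid (hf : Involutive f) : Setoid E where
  r a b := a = b ∨ a = f b
  iseqv :=
    { refl := fun _ => .inl rfl
      symm := by rintro a b (rfl | rfl) <;> simp [hf _]
      trans := by rintro a b c (rfl | rfl) (rfl | rfl) <;> simp [hf _] }

variable (hf : Involutive f)

instance [DecidableEq E] : DecidableRel hf.orbitSetoid.r :=
  fun a b => inferInstanceAs (Decidable (a = b ∨ a = f b))

theorem mk_eq_iff (p : Quotient hf.orbitSetoid) (e : E) :
    (⟦e⟧ : Quotient hf.orbitSetoid) = p ↔ e = p.out ∨ e = f p.out :=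
  Quotient.mk_eq_iff_out

theorem sum_eq_sum_orbits (hf' : ∀ e, f e ≠ e) [Fintype E] [DecidableEq E]
    {M : Type*} [AddCommMonoid M] (F : E → M) :
    ∑ e, F e = ∑ p : Quotient hf.orbitSetoid, (F p.out + F (f p.out)) := by
  rw [← Finset.sum_fiberwise Finset.univ (Quotient.mk hf.orbitSetoid) F]
  refine Finset.sum_congr rfl fun p _ => ?_
  have hfiber : ({e | ⟦e⟧ = p} : Finset E) = {p.out, f p.out} := by
    ext e
    simp [hf.mk_eq_iff]
  rw [hfiber, Finset.sum_pair (hf' _).symm]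

theorem card_eq_two_mul_card_orbits (hf' : ∀ e, f e ≠ e) [Fintype E] [DecidableEq E] :
    Fintype.card E = 2 * Fintype.card (Quotient hf.orbitSetoid) := by
  rw [Fintype.card_eq_sum_ones, hf.sum_eq_sum_orbits hf']
  simp [mul_comm]

theorem natCast_card_eq_two_mul_sum_orbits (hf' : ∀ e, f e ≠ e) [Fintype E] [DecidableEq E]
    {R : Type*} [NonAssocSemiring R] (P : E → Prop) [DecidablePred P]
    (hP : ∀ e, P (f e) ↔ P e) :
    (Nat.card {e // P e} : R) = 2 * ∑ p : Quotient hf.orbitSetoid, if P p.out then 1 else 0 := by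
  rw [Nat.card_eq_fintype_card, Fintype.card_subtype, Finset.natCast_card_filter,
    hf.sum_eq_sum_orbits hf', two_mul, ← Finset.sum_add_distrib]
  simp only [hP]

variable (k : Type*) [CommRing k]

noncomputable def orbitCoords : (E →₀ k) →ₗ[k] (Quotient hf.orbitSetoid → k) :=
  LinearMap.pi fun p => lapply p.out - lapply (f p.out)

theorem orbitCoords_apply (x : E →₀ k) (p : Quotient hf.orbitSetoid) :
    hf.orbitCoords k x p = x p.out - x (f p.out) :=
  rfl

theorem chainRelations_le_ker_orbitCoords :
    chainRelations k f ≤ LinearMap.ker (hf.orbitCoords k) := by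
  rw [chainRelations, Submodule.span_le]
  rintro _ ⟨e, rfl⟩
  classical
  ext p
  simp only [orbitCoords_apply, coe_add, Pi.add_apply, single_apply, hf.eq_iff, hf p.out,
    Pi.zero_apply]
  abel

theorem orbitCoords_single_apply (e : E) (c : k) :
    hf.orbitCoords k (single (f e) c) = -hf.orbitCoords k (single e c) := by
  rw [eq_neg_iff_add_eq_zero, ← map_add, add_comm]
  exact hf.chainRelations_le_ker_orbitCoords k (chainRelations.single_add_single_mem k e c)

variable [DecidableEq E]

theorem orbitCoords_single_out (hf' : ∀ e, f e ≠ e) (p : Quotient hf.orbitSetoid) (c : k) :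
    hf.orbitCoords k (single p.out c) = Pi.single p c := by
  ext q
  rcases eq_or_ne p q with rfl | hpq
  · simp [orbitCoords_apply, (hf' _).symm]
  · have hq : p.out ≠ q.out ∧ p.out ≠ f q.out := by
      rwa [← not_or, ← hf.mk_eq_iff q, Quotient.out_eq]
    simp [orbitCoords_apply, hq, hpq.symm]

variable [Fintype E]

noncomputable def chainsEquiv (hf' : ∀ e, f e ≠ e) :
    ((E →₀ k) ⧸ chainRelations k f) ≃ₗ[k] (Quotient hf.orbitSetoid → k) := by
  let φ := (chainRelations k f).liftQ _ (hf.chainRelations_le_ker_orbitCoords k)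
  let ψ := Fintype.linearCombination k fun p : Quotient hf.orbitSetoid =>
    (Submodule.Quotient.mk (single p.out 1) : (E →₀ k) ⧸ chainRelations k f)
  have hψ (p : Quotient hf.orbitSetoid) (c : k) :
      ψ (Pi.single p c) = Submodule.Quotient.mk (single p.out c) := by
    simp [ψ, ← Submodule.Quotient.mk_smul]
  refine LinearEquiv.ofLinearMap φ ψ (LinearMap.pi_ext fun p c => ?_)
    (Submodule.linearMap_qext _ (lhom_ext fun e c => ?_))
  · simp [hψ, φ, hf.orbitCoords_single_out k hf']
  · have hrep (p : Quotient hf.orbitSetoid) (c : k) :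
        ψ (φ (Submodule.Quotient.mk (single p.out c))) =
          Submodule.Quotient.mk (single p.out c) := by
      simp [φ, hf.orbitCoords_single_out k hf', hψ]
    change ψ (φ (Submodule.Quotient.mk (single e c))) = Submodule.Quotient.mk (single e c)
    rcases (hf.mk_eq_iff _ e).1 rfl with he | he <;> rw [he]
    · exact hrep _ c
    · rw [chainRelations.mk_single_apply, map_neg, map_neg, hrep]

theorem chainsEquiv_mk (hf' : ∀ e, f e ≠ e) (x : E →₀ k) :
    hf.chainsEquiv k hf' (Submodule.Quotient.mk x) = hf.orbitCoords k x :=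
  rfl

theorem chainsEquiv_symm_single (hf' : ∀ e, f e ≠ e) (p : Quotient hf.orbitSetoid) (c : k) :
    (hf.chainsEquiv k hf').symm (Pi.single p c) = Submodule.Quotient.mk (single p.out c) := by
  rw [LinearEquiv.symm_apply_eq, chainsEquiv_mk, hf.orbitCoords_single_out k hf']

theorem trace_eq_sum_orbits (hf' : ∀ e, f e ≠ e) (g : E → E)
    (G : ((E →₀ k) ⧸ chainRelations k f) →ₗ[k] ((E →₀ k) ⧸ chainRelations k f))
    (hG : ∀ e, G (Submodule.Quotient.mk (single e 1)) = Submodule.Quotient.mk (single (g e) 1)) :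
    LinearMap.trace k _ G = ∑ p : Quotient hf.orbitSetoid,
      ((if g p.out = p.out then 1 else 0) - if g p.out = f p.out then 1 else 0) := by
  rw [← LinearMap.trace_conj' G (hf.chainsEquiv k hf'),
    LinearMap.trace_eq_matrix_trace k (Pi.basisFun k _), LinearMap.toMatrix_eq_toMatrix',
    Matrix.trace]
  refine Finset.sum_congr rfl fun p _ => ?_
  simp [LinearEquiv.conj_apply, chainsEquiv_symm_single, hG, chainsEquiv_mk, orbitCoords_apply,
    single_apply]

theorem finrank_chains [Nontrivial k] (hf' : ∀ e, f e ≠ e) :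
    Module.finrank k ((E →₀ k) ⧸ chainRelations k f) =
      Fintype.card (Quotient hf.orbitSetoid) := by
  rw [(hf.chainsEquiv k hf').finrank_eq, Module.finrank_fintype_fun_eq_card]

end Function.Involutive

theorem trace_on_one_chains_general
    (k : Type*) [Field k] (E : Type*) [Fintype E]
    (bar : E → E) (hbar : ∀ e, bar (bar e) = e) (hbar' : ∀ e, bar e ≠ e)
    (g : E → E) (hcomm : ∀ e, g (bar e) = bar (g e))
    (N : Submodule k (E →₀ k))
    (hN : N = Submodule.span k
      {x : E →₀ k | ∃ e : E, x = Finsupp.single e 1 + Finsupp.single (bar e) 1})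
    (gbar : ((E →₀ k) ⧸ N) →ₗ[k] ((E →₀ k) ⧸ N))
    (hgbar : ∀ e : E,
      gbar (Submodule.Quotient.mk (Finsupp.single e (1 : k))) =
        Submodule.Quotient.mk (Finsupp.single (g e) (1 : k))) :
    Module.Free k ((E →₀ k) ⧸ N) ∧
    Module.finrank k ((E →₀ k) ⧸ N) = Fintype.card E / 2 ∧
    2 * LinearMap.trace k ((E →₀ k) ⧸ N) gbar =
      (Nat.card {e : E // g e = e} : k) - (Nat.card {e : E // g e = bar e} : k) := by
  classical
  obtain rfl : N = chainRelations k bar := hN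
  have hinv : Involutive bar := hbar
  have hfix (e : E) : g (bar e) = bar e ↔ g e = e := by rw [hcomm, hinv.injective.eq_iff]
  have hflip (e : E) : g (bar e) = bar (bar e) ↔ g e = bar e := by
    rw [hcomm, hinv.injective.eq_iff]
  refine ⟨.of_equiv (hinv.chainsEquiv k hbar').symm, ?_, ?_⟩
  · rw [hinv.finrank_chains k hbar', hinv.card_eq_two_mul_card_orbits hbar']
    omega
  · rw [hinv.trace_eq_sum_orbits k hbar' g gbar hgbar, Finset.sum_sub_distrib,
      hinv.natCast_card_eq_two_mul_sum_orbits hbar' _ hfix,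
      hinv.natCast_card_eq_two_mul_sum_orbits hbar' _ hflip, mul_sub]

/-- Let `k` be a field, `E` a finite set, `bar : E → E` a fixed-point-free involution and
`g : E → E` a bijection commuting with `bar`. Let `M` be the quotient of the free
`k`-module on `E` by the submodule generated by the elements `e + bar e`, and let `ḡ` be
the induced `k`-linear endomorphism of `M`. Then `M` is free of rank `card E / 2` and
`2 · trace ḡ = card {e | g e = e} − card {e | g e = bar e}` in `k`. -/
theorem trace_on_one_chains
    (k : Type*) [Field k] (E : Type*) [Fintype E]
    (bar : E → E) (hbar : ∀ e, bar (bar e) = e) (hbar' : ∀ e, bar e ≠ e)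
    (g : E → E) (hg : Function.Bijective g) (hcomm : ∀ e, g (bar e) = bar (g e))
    (N : Submodule k (E →₀ k))
    (hN : N = Submodule.span k
      {x : E →₀ k | ∃ e : E, x = Finsupp.single e 1 + Finsupp.single (bar e) 1})
    (gbar : ((E →₀ k) ⧸ N) →ₗ[k] ((E →₀ k) ⧸ N))
    (hgbar : ∀ e : E,
      gbar (Submodule.Quotient.mk (Finsupp.single e (1 : k))) =
        Submodule.Quotient.mk (Finsupp.single (g e) (1 : k))) :
    Module.Free k ((E →₀ k) ⧸ N) ∧
    Module.finrank k ((E →₀ k) ⧸ N) = Fintype.card E / 2 ∧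
    2 * LinearMap.trace k ((E →₀ k) ⧸ N) gbar =
      (Nat.card {e : E // g e = e} : k) - (Nat.card {e : E // g e = bar e} : k) :=
  trace_on_one_chains_general k E bar hbar hbar' g hcomm N hN gbar hgbar
end

section
/- Let PSL(2, 𝔽₇) denote the quotient of the special linear group SL(2, ℤ/7ℤ) by its centre. There exist elements a, b, c of PSL(2, 𝔽₇) such that a has order 7, b has order 2, c has order 3, and a · b · c = 1. (This provides the branch data for the PSL(2, 𝔽₇)-cover of the projective line ramified over three points with ramification groups of orders 7, 2 and 3, whose total space is the Klein curve of genus 3.) -/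
open Matrix

abbrev SL27 := Matrix.SpecialLinearGroup (Fin 2) (ZMod 7)

def A7 : SL27 := ⟨!![1, 1; 0, 1], by decide⟩
def B7 : SL27 := ⟨!![0, -1; 1, 0], by decide⟩
def C7 : SL27 := ⟨!![0, 1; -1, 1], by decide⟩

lemma sl_coe_eq {X : SL27} {M : Matrix (Fin 2) (Fin 2) (ZMod 7)}
    (h : (X : Matrix (Fin 2) (Fin 2) (ZMod 7)) = M) :
    (X : Matrix (Fin 2) (Fin 2) (ZMod 7)) = M := h

lemma coe_A7_pow7 : ((A7 ^ 7 : SL27) : Matrix (Fin 2) (Fin 2) (ZMod 7)) = 1 := by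
  rw [Matrix.SpecialLinearGroup.coe_pow]
  show (!![1, 1; 0, 1] : Matrix (Fin 2) (Fin 2) (ZMod 7)) ^ 7 = 1
  norm_num [pow_succ, Matrix.mul_fin_two]
  decide

lemma coe_B7_pow2 : ((B7 ^ 2 : SL27) : Matrix (Fin 2) (Fin 2) (ZMod 7)) = Matrix.scalar (Fin 2) (-1) := by
  rw [Matrix.SpecialLinearGroup.coe_pow]
  show (!![0, -1; 1, 0] : Matrix (Fin 2) (Fin 2) (ZMod 7)) ^ 2 = _
  norm_num [pow_succ, Matrix.mul_fin_two]
  decide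

lemma coe_C7_pow3 : ((C7 ^ 3 : SL27) : Matrix (Fin 2) (Fin 2) (ZMod 7)) = Matrix.scalar (Fin 2) (-1) := by
  rw [Matrix.SpecialLinearGroup.coe_pow]
  show (!![0, 1; -1, 1] : Matrix (Fin 2) (Fin 2) (ZMod 7)) ^ 3 = _
  norm_num [pow_succ, Matrix.mul_fin_two]
  decide

lemma coe_prod : ((A7 * B7 * C7 : SL27) : Matrix (Fin 2) (Fin 2) (ZMod 7)) = 1 := by
  rw [Matrix.SpecialLinearGroup.coe_mul, Matrix.SpecialLinearGroup.coe_mul]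
  show (!![1, 1; 0, 1] : Matrix (Fin 2) (Fin 2) (ZMod 7)) * !![0, -1; 1, 0] * !![0, 1; -1, 1] = 1
  norm_num [Matrix.mul_fin_two]
  decide

lemma h1' : (1 : ZMod 7) ^ 2 = 1 := by decide
lemma hn1' : (-1 : ZMod 7) ^ 2 = 1 := by decide

lemma not_mem_center {X : SL27}
    (h : ∀ r : ZMod 7, r ^ 2 = 1 → Matrix.scalar (Fin 2) r ≠ (X : Matrix (Fin 2) (Fin 2) (ZMod 7))) :
    X ∉ Subgroup.center SL27 := by
  rw [Matrix.SpecialLinearGroup.mem_center_iff]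
  rintro ⟨r, hr, hr'⟩
  exact h r (by simpa using hr) hr'

lemma mem_center {X : SL27} (r : ZMod 7)
    (h : Matrix.scalar (Fin 2) r = (X : Matrix (Fin 2) (Fin 2) (ZMod 7))) (hr : r ^ 2 = 1) :
    X ∈ Subgroup.center SL27 := by
  rw [Matrix.SpecialLinearGroup.mem_center_iff]
  exact ⟨r, by simpa using hr, h⟩

lemma A7_nc : A7 ∉ Subgroup.center SL27 := by
  apply not_mem_center
  intro r hr h
  have := congrArg (fun M => M 0 1) h
  simp [A7] at this
  exact absurd this (by decide)

lemma B7_nc : B7 ∉ Subgroup.center SL27 := by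
  apply not_mem_center
  intro r hr h
  have := congrArg (fun M => M 1 0) h
  simp [B7] at this
  exact absurd this (by decide)

lemma C7_nc : C7 ∉ Subgroup.center SL27 := by
  apply not_mem_center
  intro r hr h
  have := congrArg (fun M => M 0 1) h
  simp [C7] at this
  exact absurd this (by decide)

/-- In `PSL(2, 𝔽₇)`, the quotient of `SL(2, ℤ/7ℤ)` by its centre, there exist elements
`a`, `b`, `c` of orders 7, 2 and 3 respectively with `a * b * c = 1`. -/
theorem exists_PSL27_branch_data :
    ∃ a b c : Matrix.SpecialLinearGroup (Fin 2) (ZMod 7) ⧸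
        Subgroup.center (Matrix.SpecialLinearGroup (Fin 2) (ZMod 7)),
      orderOf a = 7 ∧ orderOf b = 2 ∧ orderOf c = 3 ∧ a * b * c = 1 := by
  haveI : Fact (Nat.Prime 7) := ⟨by norm_num⟩
  haveI : Fact (Nat.Prime 2) := ⟨by norm_num⟩
  haveI : Fact (Nat.Prime 3) := ⟨by norm_num⟩
  have h1 := h1'
  have hn1 := hn1'
  refine ⟨QuotientGroup.mk A7, QuotientGroup.mk B7, QuotientGroup.mk C7, ?_, ?_, ?_, ?_⟩
  · refine orderOf_eq_prime ?_ ?_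
    · rw [← QuotientGroup.mk_pow, QuotientGroup.eq_one_iff]
      exact mem_center (X := A7 ^ 7) 1 (by rw [coe_A7_pow7]; simp) h1
    · rw [Ne, QuotientGroup.eq_one_iff]
      exact A7_nc
  · refine orderOf_eq_prime ?_ ?_
    · rw [← QuotientGroup.mk_pow, QuotientGroup.eq_one_iff]
      exact mem_center (X := B7 ^ 2) (-1) (by rw [coe_B7_pow2]) hn1
    · rw [Ne, QuotientGroup.eq_one_iff]
      exact B7_nc
  · refine orderOf_eq_prime ?_ ?_
    · rw [← QuotientGroup.mk_pow, QuotientGroup.eq_one_iff]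
      exact mem_center (X := C7 ^ 3) (-1) (by rw [coe_C7_pow3]) hn1
    · rw [Ne, QuotientGroup.eq_one_iff]
      exact C7_nc
  · rw [← QuotientGroup.mk_mul, ← QuotientGroup.mk_mul, QuotientGroup.eq_one_iff]
    exact mem_center (X := A7 * B7 * C7) 1 (by rw [coe_prod]; simp) h1
end

section
/- Let k be a field, B = k⟦x⟧ × k⟦x⟧ the product of two copies of the formal power series ring in one variable over k, and A ⊆ B the k-subalgebra of pairs (f, g) whose constant terms agree. Then the k-algebra homomorphism k⟦u,v⟧/(uv) → B determined by u ↦ (x, 0) and v ↦ (0, x) is injective with range exactly A. In particular the complete local ring of a node is isomorphic to the subring of its normalisation consisting of pairs of power series agreeing at the two branch points. -/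
/-- The `k`-subalgebra of `k⟦x⟧ × k⟦x⟧` consisting of the pairs of power series whose
constant terms agree. -/
def agreeingPairsSubalgebra (k : Type*) [Field k] :
    Subalgebra k (PowerSeries k × PowerSeries k) where
  carrier := {p | PowerSeries.constantCoeff p.1 = PowerSeries.constantCoeff p.2}
  mul_mem' {a b} ha hb := by
    simp only [Set.mem_setOf_eq, Prod.fst_mul, Prod.snd_mul, map_mul] at *
    rw [ha, hb]
  add_mem' {a b} ha hb := by
    simp only [Set.mem_setOf_eq, Prod.fst_add, Prod.snd_add, map_add] at *
    rw [ha, hb]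
  algebraMap_mem' r := rfl

noncomputable def projAux (k : Type*) [Field k] (j : Fin 2) :
    MvPowerSeries (Fin 2) k →ₐ[k] PowerSeries k where
  toFun f := PowerSeries.mk fun i => MvPowerSeries.coeff (Finsupp.single j i) f
  map_one' := by
    ext n
    simp [MvPowerSeries.coeff_one, Finsupp.single_eq_zero]
  map_mul' f g := by
    ext n
    rw [PowerSeries.coeff_mk, PowerSeries.coeff_mul, MvPowerSeries.coeff_mul,
      Finsupp.antidiagonal_single, Finset.sum_map]
    simp
  map_zero' := by ext n; simp
  map_add' f g := by ext n; simp
  commutes' r := by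
    ext n
    simp [MvPowerSeries.coeff_C, Finsupp.single_eq_zero, PowerSeries.coeff_C,
      MvPowerSeries.algebraMap_apply, PowerSeries.algebraMap_apply]


open MvPowerSeries in
/-- Let `k` be a field and `B = k⟦x⟧ × k⟦x⟧`. The `k`-algebra homomorphism
`k⟦u,v⟧/(uv) → B` determined by `u ↦ (x, 0)` and `v ↦ (0, x)` is injective with range
exactly the subalgebra of pairs of power series whose constant terms agree: the complete
local ring of a node is the subring of its normalisation consisting of pairs of power
series agreeing at the two branch points. -/
theorem node_normalisation_description
    (k : Type*) [Field k]
    (I : Ideal (MvPowerSeries (Fin 2) k))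
    (hI : I = Ideal.span {MvPowerSeries.X 0 * MvPowerSeries.X 1}) :
    ∃ Φ : (MvPowerSeries (Fin 2) k ⧸ I) →ₐ[k] (PowerSeries k × PowerSeries k),
      (∀ f : MvPowerSeries (Fin 2) k,
        Φ (Ideal.Quotient.mk I f) =
          (PowerSeries.mk fun i => MvPowerSeries.coeff (Finsupp.single 0 i) f,
           PowerSeries.mk fun i => MvPowerSeries.coeff (Finsupp.single 1 i) f)) ∧
      Function.Injective Φ ∧
      Φ.range = agreeingPairsSubalgebra k := by
  classical
  set e : Fin 2 →₀ ℕ := Finsupp.single 0 1 + Finsupp.single 1 1 with he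
  set ψ : MvPowerSeries (Fin 2) k →ₐ[k] PowerSeries k × PowerSeries k :=
    (projAux k 0).prod (projAux k 1) with hψ
  have hψapp : ∀ f, ψ f = (PowerSeries.mk fun i => MvPowerSeries.coeff (Finsupp.single 0 i) f,
      PowerSeries.mk fun i => MvPowerSeries.coeff (Finsupp.single 1 i) f) := fun f => rfl
  have hXX : (X 0 * X 1 : MvPowerSeries (Fin 2) k) = monomial e 1 := by
    rw [X_def, X_def, monomial_mul_monomial, one_mul]
  have he0 : e 0 = 1 := by simp [he, Finsupp.single_apply]
  have he1 : e 1 = 1 := by simp [he, Finsupp.single_apply]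
  have hsingle_ne : ∀ (j : Fin 2) (n : ℕ), Finsupp.single j n ≠ e := by
    intro j n h
    have h0 := DFunLike.congr_fun h 0
    have h1 := DFunLike.congr_fun h 1
    rw [he0] at h0; rw [he1] at h1
    fin_cases j <;> simp [Finsupp.single_apply] at h0 h1
  have hcoeffXX : ∀ (j : Fin 2) (n : ℕ),
      MvPowerSeries.coeff (Finsupp.single j n) (X 0 * X 1 : MvPowerSeries (Fin 2) k) = 0 := by
    intro j n
    rw [hXX, coeff_monomial, if_neg (hsingle_ne j n)]
  have hgen : ψ (X 0 * X 1 : MvPowerSeries (Fin 2) k) = 0 := by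
    rw [hψapp]
    refine Prod.ext ?_ ?_ <;> · ext n; simp [hcoeffXX]
  have hker : ∀ a ∈ I, ψ a = 0 := by
    rw [hI]; intro a ha
    rw [Ideal.mem_span_singleton] at ha
    obtain ⟨c, rfl⟩ := ha
    rw [map_mul, hgen, zero_mul]
  have hmemI : ∀ f : MvPowerSeries (Fin 2) k, ψ f = 0 → f ∈ I := by
    intro f hf
    have h0 : ∀ i, MvPowerSeries.coeff (Finsupp.single 0 i) f = 0 := by
      intro i
      have := congrArg Prod.fst (hψapp f ▸ hf)
      simpa using congrArg (PowerSeries.coeff i) this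
    have h1 : ∀ i, MvPowerSeries.coeff (Finsupp.single 1 i) f = 0 := by
      intro i
      have := congrArg Prod.snd (hψapp f ▸ hf)
      simpa using congrArg (PowerSeries.coeff i) this
    rw [hI, Ideal.mem_span_singleton]
    refine ⟨(fun d => f (d + e) : MvPowerSeries (Fin 2) k), ?_⟩
    ext d
    erw [hXX, coeff_monomial_mul, MvPowerSeries.coeff_apply]
    split
    · next hle =>
      erw [one_mul, MvPowerSeries.coeff_apply]
      show f d = f (d - e + e)
      rw [tsub_add_cancel_of_le hle]
    · next hle =>
      have hor : d 0 = 0 ∨ d 1 = 0 := by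
        by_contra hcon
        push_neg at hcon
        refine hle (Finsupp.le_def.mpr (Fin.forall_fin_two.mpr ⟨?_, ?_⟩))
        · rw [he0]; omega
        · rw [he1]; omega
      rcases hor with hd0 | hd1
      · obtain ⟨m, rfl⟩ : ∃ m, d = Finsupp.single 1 m :=
          ⟨d 1, Finsupp.ext (Fin.forall_fin_two.mpr
            ⟨by simp [Finsupp.single_apply, hd0], by simp⟩)⟩
        exact h1 m
      · obtain ⟨m, rfl⟩ : ∃ m, d = Finsupp.single 0 m :=
          ⟨d 0, Finsupp.ext (Fin.forall_fin_two.mpr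
            ⟨by simp, by simp [Finsupp.single_apply, hd1]⟩)⟩
        exact h0 m
  refine ⟨Ideal.Quotient.liftₐ I ψ hker, fun f => ?_, ?_, ?_⟩
  · erw [Ideal.Quotient.liftₐ_apply, Ideal.Quotient.lift_mk]
    exact hψapp f
  · rw [injective_iff_map_eq_zero]
    intro a ha
    obtain ⟨f, rfl⟩ := Ideal.Quotient.mk_surjective a
    erw [Ideal.Quotient.liftₐ_apply, Ideal.Quotient.lift_mk] at ha
    rw [Ideal.Quotient.eq_zero_iff_mem]
    exact hmemI f ha
  · ext p
    simp only [AlgHom.mem_range]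
    constructor
    · rintro ⟨a, rfl⟩
      obtain ⟨f, rfl⟩ := Ideal.Quotient.mk_surjective a
      erw [Ideal.Quotient.liftₐ_apply, Ideal.Quotient.lift_mk]
      show PowerSeries.constantCoeff (ψ f).1 = PowerSeries.constantCoeff (ψ f).2
      rw [hψapp]
      simp [← PowerSeries.coeff_zero_eq_constantCoeff]
    · intro hp
      have hp' : PowerSeries.constantCoeff p.1 = PowerSeries.constantCoeff p.2 := hp
      set F : MvPowerSeries (Fin 2) k := fun d =>
        if d 1 = 0 then PowerSeries.coeff (d 0) p.1
        else if d 0 = 0 then PowerSeries.coeff (d 1) p.2 else 0 with hF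
      refine ⟨Ideal.Quotient.mk I F, ?_⟩
      erw [Ideal.Quotient.liftₐ_apply, Ideal.Quotient.lift_mk]
      show ψ F = p
      rw [hψapp]
      refine Prod.ext ?_ ?_
      · ext n
        rw [PowerSeries.coeff_mk, MvPowerSeries.coeff_apply, hF]
        simp [Finsupp.single_apply]
      · ext n
        rw [PowerSeries.coeff_mk, MvPowerSeries.coeff_apply, hF]
        rcases eq_or_ne n 0 with rfl | hn
        · simpa [← PowerSeries.coeff_zero_eq_constantCoeff] using hp'
        · simp [Finsupp.single_apply, hn]
end
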